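/- For every nonnegative integer n and real x with sin x ≠ 0, the n-th derivative of cot at x equals (-1)^n [T(n,1) + Σ_{k=1}^{n+1} (1/k) T(n+1,k) cot^k(x)]. -/

import Mathlib

noncomputable def T (n k : ℕ) : ℝ :=
  iteratedDeriv n (fun t : ℝ => Real.tan t ^ k) 0

/-!
Differentiating `tan ^ (k + 1)` once, with `tan' = 1 + tan ^ 2`, gives the recurrence
`T (m + 1) (k + 1) = (k + 1) * (T m k + T m (k + 2))`. It shows that the polynomial
`P n c = T n 1 + ∑ k, T (n + 1) k / k * c ^ k` satisfies `(1 + c ^ 2) * P n' c = P (n + 1) c`.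
Since `cot' = -(1 + cot ^ 2)`, the formula `cot⁽ⁿ⁾ = (-1) ^ n * P n ∘ cot` then follows by induction on `n`.
-/

open Real Topology Finset

lemma hasDerivAt_tan_pow_succ {x : ℝ} (hx : cos x ≠ 0) (k : ℕ) :
    HasDerivAt (fun t => tan t ^ (k + 1)) ((k + 1) * (tan x ^ k + tan x ^ (k + 2))) x := by
  refine ((hasDerivAt_tan hx).fun_pow (k + 1)).congr_deriv ?_
  rw [one_div, ← inv_one_add_tan_sq hx, inv_inv]
  push_cast
  ring

lemma T_zero_left (k : ℕ) : T 0 k = 0 ^ k := by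
  simp [T]

lemma T_succ_succ (m k : ℕ) : T (m + 1) (k + 1) = (k + 1) * (T m k + T m (k + 2)) := by
  have h0 : cos 0 ≠ 0 := by simp
  have hderiv : deriv (fun t => tan t ^ (k + 1))
      =ᶠ[𝓝 0] fun t => (k + 1) * (tan t ^ k + tan t ^ (k + 2)) := by
    filter_upwards [(isOpen_ne_fun continuous_cos continuous_const).mem_nhds h0] with t ht
    exact (hasDerivAt_tan_pow_succ ht k).deriv
  have hsmooth (j : ℕ) : ContDiffAt ℝ m (fun t => tan t ^ j) 0 :=
    (contDiffAt_tan.2 h0).pow j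
  rw [T, iteratedDeriv_succ', hderiv.iteratedDeriv_eq, iteratedDeriv_const_mul_field,
    iteratedDeriv_fun_add (hsmooth k) (hsmooth (k + 2)), T, T]

lemma T_succ_zero (m : ℕ) : T (m + 1) 0 = 0 := by
  simp [T, iteratedDeriv_succ']

lemma T_eq_zero_of_lt {m k : ℕ} (h : m < k) : T m k = 0 := by
  induction m generalizing k with
  | zero => rw [T_zero_left, zero_pow h.ne']
  | succ m ih =>
    obtain ⟨k, rfl⟩ := Nat.exists_eq_add_of_lt (Nat.zero_lt_of_lt h)
    rw [zero_add, T_succ_succ, ih (by omega), ih (by omega), add_zero, mul_zero]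

-- With its boundary terms the identity holds for every `N`, which makes it provable by induction.
lemma sum_range_shift_mul_one_add_sq {R : Type*} [CommRing R] (a : ℕ → R) (c : R) (N : ℕ) :
    (∑ i ∈ range N, a (i + 1) * c ^ i) * (1 + c ^ 2) + a 0 * c + a (N + 1) * c ^ N
        + a (N + 2) * c ^ (N + 1)
      = a 1 + ∑ i ∈ range (N + 1), (a i + a (i + 2)) * c ^ (i + 1) := by
  induction N with
  | zero => rw [sum_range_zero, sum_range_one]; ring
  | succ N ih =>
    rw [sum_range_succ, sum_range_succ _ (N + 1)]
    linear_combination ih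

lemma sum_Icc_one_eq_sum_range {M : Type*} [AddCommMonoid M] (f : ℕ → M) (N : ℕ) :
    ∑ k ∈ Icc 1 N, f k = ∑ i ∈ range N, f (i + 1) := by
  rw [← Ico_add_one_right_eq_Icc, sum_Ico_eq_sum_range, add_tsub_cancel_right]
  simp only [add_comm 1]

noncomputable def cotDerivPoly (n : ℕ) (c : ℝ) : ℝ :=
  T n 1 + ∑ k ∈ Icc 1 (n + 1), 1 / (k : ℝ) * T (n + 1) k * c ^ k

lemma hasDerivAt_cotDerivPoly (n : ℕ) (c : ℝ) :
    HasDerivAt (cotDerivPoly n) (∑ k ∈ Icc 1 (n + 1), T (n + 1) k * c ^ (k - 1)) c := by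
  have hterm (k : ℕ) (hk : k ∈ Icc 1 (n + 1)) :
      HasDerivAt (fun c : ℝ => 1 / (k : ℝ) * T (n + 1) k * c ^ k) (T (n + 1) k * c ^ (k - 1)) c := by
    have hk0 : (k : ℝ) ≠ 0 := Nat.cast_ne_zero.2 (Nat.one_le_iff_ne_zero.1 (mem_Icc.1 hk).1)
    refine ((hasDerivAt_pow k c).const_mul (1 / (k : ℝ) * T (n + 1) k)).congr_deriv ?_
    field_simp
  exact (HasDerivAt.fun_sum hterm).const_add (T n 1)

lemma sum_T_mul_pow_mul_one_add_sq (n : ℕ) (c : ℝ) :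
    (∑ k ∈ Icc 1 (n + 1), T (n + 1) k * c ^ (k - 1)) * (1 + c ^ 2) = cotDerivPoly (n + 1) c := by
  have hshift := sum_range_shift_mul_one_add_sq (T (n + 1)) c (n + 1)
  rw [T_succ_zero, T_eq_zero_of_lt (by omega), T_eq_zero_of_lt (by omega)] at hshift
  have hcoeff (i : ℕ) : 1 / ((i + 1 : ℕ) : ℝ) * T (n + 2) (i + 1) = T (n + 1) i + T (n + 1) (i + 2) := by
    rw [T_succ_succ]; push_cast; field_simp
  simp only [cotDerivPoly, sum_Icc_one_eq_sum_range, Nat.add_sub_cancel, hcoeff]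
  linear_combination hshift

lemma hasDerivAt_cos_div_sin {x : ℝ} (hx : sin x ≠ 0) :
    HasDerivAt (fun y => cos y / sin y) (-(1 + (cos x / sin x) ^ 2)) x := by
  refine ((hasDerivAt_cos x).fun_div (hasDerivAt_sin x) hx).congr_deriv ?_
  field_simp
  ring

theorem deriv_cot_closed (n : ℕ) (x : ℝ) (hx : Real.sin x ≠ 0) :
    iteratedDeriv n (fun y : ℝ => Real.cos y / Real.sin y) x
      = (-1 : ℝ) ^ n * (T n 1 + ∑ k ∈ Finset.Icc 1 (n + 1),
          (1 / (k : ℝ)) * T (n + 1) k * (Real.cos x / Real.sin x) ^ k) := by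
  change _ = (-1) ^ n * cotDerivPoly n (cos x / sin x)
  induction n generalizing x with
  | zero => simp [cotDerivPoly, T_zero_left, T_succ_succ 0 0]
  | succ n ih =>
    have hev : iteratedDeriv n (fun y => cos y / sin y)
        =ᶠ[𝓝 x] fun y => (-1) ^ n * cotDerivPoly n (cos y / sin y) := by
      filter_upwards [(isOpen_ne_fun continuous_sin continuous_const).mem_nhds hx] with y hy
      exact ih y hy
    have hderiv := ((hasDerivAt_cotDerivPoly n _).comp x (hasDerivAt_cos_div_sin hx)).const_mul
      ((-1 : ℝ) ^ n)
    rw [iteratedDeriv_succ, hev.deriv_eq]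
    refine hderiv.deriv.trans ?_
    rw [← sum_T_mul_pow_mul_one_add_sq]
    ring
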